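/- For every [t:s] ∈ ℙ¹, the point with affine representative (x₂,x₃,y₂,y₃) determined by g([t:s]) = [3t²: t³: 3s²: s³: (s+t)/2] is a singular point of the vector field v, i.e., if t+s ≠ 0 then v vanishes at the point (x₂,x₃,y₂,y₃) = (3t²·λ², t³·λ³, 3s²·λ², s³·λ³) where λ = 2/(s+t) (after accounting for the weighted scaling with weights (2,3,2,3)). -/

import Mathlib

/-! Along the weighted orbit `(3t²λ², t³λ³, 3s²λ², s³λ³)` every component of `v` is a polynomial
multiple of `λ(s + t) - 2`, so it vanishes at the normalisation `λ = 2/(s + t)`. -/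

/-- The four components of the vector field `v` on ℂ⁴ in coordinates `(x₂,x₃,y₂,y₃)`. -/
noncomputable def vComp (x₂ x₃ y₂ y₃ : ℂ) : ℂ × ℂ × ℂ × ℂ :=
  (2 * x₂ - 6 * x₃ + (1/6) * (x₂ - y₂) * x₂,
   3 * x₃ - (1/3) * x₂ ^ 2 + (1/4) * (x₂ - y₂) * x₃,
   -(2 * y₂ - 6 * y₃ + (1/6) * (y₂ - x₂) * y₂),
   -(3 * y₃ - (1/3) * y₂ ^ 2 + (1/4) * (y₂ - x₂) * y₃))

theorem vComp_weighted_eq_zero {t s l : ℂ} (hl : l * (s + t) = 2) :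
    vComp (3 * t ^ 2 * l ^ 2) (t ^ 3 * l ^ 3) (3 * s ^ 2 * l ^ 2) (s ^ 3 * l ^ 3) = (0, 0, 0, 0) := by
  simp only [vComp, Prod.mk.injEq]
  refine ⟨?_, ?_, ?_, ?_⟩
  · linear_combination (3 / 2 * l ^ 3 * t ^ 2 * (t - s) - 3 * l ^ 2 * t ^ 2) * hl
  · linear_combination (3 / 4 * l ^ 4 * t ^ 3 * (t - s) - 3 / 2 * l ^ 3 * t ^ 3) * hl
  · linear_combination (3 * l ^ 2 * s ^ 2 - 3 / 2 * l ^ 3 * s ^ 2 * (s - t)) * hl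
  · linear_combination (3 / 2 * l ^ 3 * s ^ 3 - 3 / 4 * l ^ 4 * s ^ 3 * (s - t)) * hl

/-- For every `[t:s] ∈ ℙ¹` with `t + s ≠ 0`, the affine point representing
`g([t:s]) = [3t² : t³ : 3s² : s³ : (s+t)/2]`, obtained with the weighted scaling
`λ = 2/(s+t)` and weights `(2,3,2,3)`, namely
`(3t²λ², t³λ³, 3s²λ², s³λ³)`, is a singular point of `v`: all four components vanish. -/
theorem singular_curve_of_v (t s : ℂ) (h : t + s ≠ 0) :
    vComp (3 * t ^ 2 * (2 / (s + t)) ^ 2) (t ^ 3 * (2 / (s + t)) ^ 3)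
      (3 * s ^ 2 * (2 / (s + t)) ^ 2) (s ^ 3 * (2 / (s + t)) ^ 3) = (0, 0, 0, 0) :=
  vComp_weighted_eq_zero (div_mul_cancel₀ 2 (by rwa [add_comm]))
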